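/- arXiv:1606.02506 — 2 statements merged into one kernel-verified Lean document; each statement's English description precedes it below -/
import Mathlib

section
/- Let G₁ and G₂ be infinite finitely generated groups with finite generating sets S₁ and S₂. Then for the summed generating set S₁ ⊥ S₂ of G₁ × G₂, the graph S_{G₁×G₂}(n,1)^∞ is connected for every n. -/
/-! ### Cayley graphs, word metric, spheres, annuli -/

/-- The Cayley graph of a group with respect to a set `S` of generators
(symmetrized, without loops). -/
def cayley (G : Type*) [Group G] (S : Set G) : SimpleGraph G where
  Adj g h := g ≠ h ∧ (g⁻¹ * h ∈ S ∨ h⁻¹ * g ∈ S)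
  symm := by
    constructor
    rintro g h ⟨hne, hs⟩
    exact ⟨hne.symm, hs.symm⟩
  loopless := by
    constructor
    rintro g ⟨hne, -⟩
    exact hne rfl

variable {G : Type*} [Group G]

/-- The word length of `g`, i.e. the distance from the identity to `g` in the Cayley graph. -/
noncomputable def wlen (S : Set G) (g : G) : ℕ :=
  (cayley G S).dist 1 g

/-- The ball of radius `n`. -/
def wBall (S : Set G) (n : ℕ) : Set G := {g | wlen S g ≤ n}

/-- The sphere of radius `n`. -/
def wSphere (S : Set G) (n : ℕ) : Set G := {g | wlen S g = n}

/-- The annulus of radius `n` and thickness `r`, i.e. `B(n+r) \ B(n-1)`. -/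
def wAnnulus (S : Set G) (n r : ℕ) : Set G := {g | n ≤ wlen S g ∧ wlen S g ≤ n + r}

/-- The part of `A` lying in infinite connected components of the subgraph of the
Cayley graph induced on `A`.  When the infinite component is unique (one-ended case)
this is exactly the infinite component of `A`. -/
def infPart (S : Set G) (A : Set G) : Set G :=
  {g | ∃ hg : g ∈ A, {w : ↥A | ((cayley G S).induce A).Reachable ⟨g, hg⟩ w}.Infinite}

/-- `S(n,r)^∞ = B(n+r) ∩ B(n-1)^{c,∞}`: the elements of the annulus connected to infinity. -/
def sphereInf (S : Set G) (n r : ℕ) : Set G :=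
  wAnnulus S n r ∩ infPart S {g | n ≤ wlen S g}

/-- The graph `S(n,r)^∞` is connected. -/
def SpheresConn (S : Set G) (n r : ℕ) : Prop :=
  ((cayley G S).induce (sphereInf S n r)).Connected

/-- The connection thickness `th_{G,S}(n)`: the least `r` such that `S(n,r)^∞` is connected. -/
noncomputable def connThickness (S : Set G) (n : ℕ) : ℕ :=
  sInf {r | SpheresConn S n r}

/-- The retreat depth of `g`: the least `d ≥ 0` such that `g` belongs to an infinite
component of the complement of `B(|g|-d-1)`. -/
noncomputable def retreatDepth (S : Set G) (g : G) : ℕ :=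
  sInf {d | g ∈ infPart S {x | wlen S g ≤ wlen S x + d}}

/-- `rd(G,S) = sup_g rd(g)`, as an extended natural number. -/
noncomputable def rdSup (S : Set G) : ℕ∞ :=
  ⨆ g : G, (retreatDepth S g : ℕ∞)

/-- `g` is a dead-end: no neighbour of `g` is further away from the identity. -/
def IsDeadEnd (S : Set G) (g : G) : Prop :=
  ∀ h : G, (cayley G S).Adj g h → wlen S h ≤ wlen S g

/-- `x` and `y` are connected by a path staying inside `A`. -/
def connectedIn (S : Set G) (A : Set G) (x y : G) : Prop :=
  ∃ w : (cayley G S).Walk x y, ∀ v ∈ w.support, v ∈ A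

/-- The travelling salesman distance from `x` to `y` through `A`: the length of the
shortest walk from `x` to `y` visiting every vertex of `A`. -/
noncomputable def tsDist {V : Type*} (H : SimpleGraph V) (x : V) (A : Set V) (y : V) : ℕ :=
  sInf {n | ∃ w : H.Walk x y, w.length = n ∧ ∀ a ∈ A, a ∈ w.support}

/-! ### Entropy of partitions -/

/-- Shannon entropy of the partition of the finite set `A` into blocks `P x` (the block
of `x ∈ A`), with respect to the uniform measure:
`H(Π) = -∑_{π ∈ Π} μ(π) log μ(π) = -(1/|A|) ∑_{x ∈ A} log (|P x|/|A|)`. -/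
noncomputable def partitionEntropy (A : Set G) (P : G → Set G) : ℝ :=
  -(1 / (Nat.card ↥A : ℝ)) * ∑ᶠ x ∈ A, Real.log ((Nat.card ↥(P x) : ℝ) / (Nat.card ↥A : ℝ))

/-- Normalised entropy `h(Π) = H(Π)/log |Π|`, where `|Π|` is the number of blocks. -/
noncomputable def normalizedEntropy (A : Set G) (P : G → Set G) : ℝ :=
  partitionEntropy A P / Real.log (Nat.card ↥(P '' A))

/-- The block of `x` in the partition `Π(n,r)` of `S(n)`: elements of `S(n)` joined
to `x` by a path inside the annulus `S(n,r)`. -/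
def piBlock (S : Set G) (n r : ℕ) (x : G) : Set G :=
  {y | y ∈ wSphere S n ∧ connectedIn S (wAnnulus S n r) x y}

/-- The block of `x` in the partition `Π(n,r)^∞` of `S(n)^∞`: elements of `S(n)^∞`
joined to `x` by a path inside `S(n,r)^∞`. -/
def piBlockInf (S : Set G) (n r : ℕ) (x : G) : Set G :=
  {y | y ∈ sphereInf S n 0 ∧ connectedIn S (sphereInf S n r) x y}

/-! ### Wreath products -/

/-- Finitely supported functions `Γ → L`, as a subgroup of the product group. -/
def LampGroup (Γ L : Type*) [Group Γ] [Group L] : Subgroup (Γ → L) where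
  carrier := {f | (Function.mulSupport f).Finite}
  one_mem' := by
    refine Set.Finite.subset Set.finite_empty fun x hx => ?_
    exact hx rfl
  mul_mem' := by
    intro a b ha hb
    exact (Set.Finite.union ha hb).subset (Function.mulSupport_mul a b)
  inv_mem' := by
    intro a ha
    refine ha.subset fun x hx => ?_
    simp only [Function.mem_mulSupport, Pi.inv_apply, ne_eq, inv_eq_one] at hx
    exact hx

variable (Γ L : Type*) [Group Γ] [Group L]

/-- Translation action of `Γ` on finitely supported lamp configurations. -/
noncomputable def shiftAut (γ : Γ) : ↥(LampGroup Γ L) ≃* ↥(LampGroup Γ L) where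
  toFun f := ⟨fun x => (f : Γ → L) (γ⁻¹ * x), by
    show (Function.mulSupport fun x => (f : Γ → L) (γ⁻¹ * x)).Finite
    exact Set.Finite.preimage ((mul_right_injective γ⁻¹).injOn) f.2⟩
  invFun f := ⟨fun x => (f : Γ → L) (γ * x), by
    show (Function.mulSupport fun x => (f : Γ → L) (γ * x)).Finite
    exact Set.Finite.preimage ((mul_right_injective γ).injOn) f.2⟩
  left_inv := by
    intro f
    apply Subtype.ext
    funext x
    simp
  right_inv := by
    intro f
    apply Subtype.ext
    funext x
    simp
  map_mul' := by
    intro f g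
    apply Subtype.ext
    rfl

/-- The action homomorphism `Γ →* Aut(⊕_Γ L)`. -/
noncomputable def shiftHom : Γ →* MulAut ↥(LampGroup Γ L) where
  toFun := shiftAut Γ L
  map_one' := by
    apply MulEquiv.ext
    intro f
    apply Subtype.ext
    funext x
    simp [shiftAut]
  map_mul' := by
    intro a b
    apply MulEquiv.ext
    intro f
    apply Subtype.ext
    funext x
    simp [shiftAut, mul_assoc]

/-- The (restricted) wreath product `Γ ≀ L = Γ ⋉ (⊕_Γ L)`. -/
abbrev Wreath := ↥(LampGroup Γ L) ⋊[shiftHom Γ L] Γ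

open Classical in
/-- The element `(e_Γ, δ_l)` of the wreath product: lamp `l` at the identity. -/
noncomputable def lampElt (l : L) : Wreath Γ L :=
  ⟨⟨fun x => if x = (1 : Γ) then l else 1, by
    refine Set.Finite.subset (Set.finite_singleton (1 : Γ)) fun x hx => ?_
    rcases eq_or_ne x 1 with h | h
    · simp [h]
    · exact absurd (if_neg h) hx⟩, 1⟩

/-- The element `(γ, Id)` of the wreath product. -/
def baseElt (γ : Γ) : Wreath Γ L := ⟨1, γ⟩

/-- The "switch-walk-switch" generating set `L S_Γ L`. -/
noncomputable def swsw (SΓ : Set Γ) : Set (Wreath Γ L) :=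
  {g | ∃ l l' : L, ∃ s ∈ SΓ, g = lampElt Γ L l * baseElt Γ L s * lampElt Γ L l'}

/-- The "switch or walk" generating set `S_Γ ∪ S_L`. -/
noncomputable def walkOrSwitch (SΓ : Set Γ) (SL : Set L) : Set (Wreath Γ L) :=
  (baseElt Γ L '' SΓ) ∪ (lampElt Γ L '' SL)

/-- `ℤ` written multiplicatively. -/
abbrev MZ := Multiplicative ℤ

/-- The generating set `{±1}` of `ℤ`. -/
def genZ : Set MZ := {Multiplicative.ofAdd 1, Multiplicative.ofAdd (-1)}

/-- The ladder `ℤ × ℤ/2ℤ` written multiplicatively. -/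
abbrev Ladder := Multiplicative (ℤ × ZMod 2)

/-- The generating set `{(±1,0), (0,1)}` of the ladder. -/
def genLadder : Set Ladder :=
  {Multiplicative.ofAdd (1, 0), Multiplicative.ofAdd (-1, 0), Multiplicative.ofAdd (0, 1)}

/-- The set of vertices of the minimal subtree of a tree containing a set `X`:
all vertices lying on a geodesic between two points of `X`. -/
def treeHull {V : Type*} (H : SimpleGraph V) (X : Set V) : Set V :=
  {v | ∃ x ∈ X, ∃ y ∈ X, H.dist x v + H.dist v y = H.dist x y}


/-- The "summed" generating set `S₁ ⊥ S₂ = (S₁ × {e}) ∪ ({e} × S₂)` of a direct product. -/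
def sumGen {G₁ G₂ : Type*} [Group G₁] [Group G₂] (S₁ : Set G₁) (S₂ : Set G₂) :
    Set (G₁ × G₂) :=
  ((fun s => (s, (1 : G₂))) '' S₁) ∪ ((fun s => ((1 : G₁), s)) '' S₂)

/-! ### Auxiliary development for Statement 17 -/

namespace Stmt17

open SimpleGraph

section Generic

variable {G : Type*} [Group G]

lemma cayley_adj {S : Set G} {g h : G} :
    (cayley G S).Adj g h ↔ g ≠ h ∧ (g⁻¹ * h ∈ S ∨ h⁻¹ * g ∈ S) := Iff.rfl

/-- Left translation as a graph isomorphism of the Cayley graph. -/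
def cayleyMulLeft (S : Set G) (x : G) : cayley G S ≃g cayley G S where
  toEquiv := Equiv.mulLeft x
  map_rel_iff' := by
    intro a b
    show (cayley G S).Adj (x * a) (x * b) ↔ (cayley G S).Adj a b
    have h1 : (x * a)⁻¹ * (x * b) = a⁻¹ * b := by group
    have h2 : (x * b)⁻¹ * (x * a) = b⁻¹ * a := by group
    constructor
    · rintro ⟨hne, hs⟩
      exact ⟨fun h => hne (by rw [h]), by rwa [h1, h2] at hs⟩
    · rintro ⟨hne, hs⟩
      exact ⟨fun h => hne (mul_left_cancel h), by rwa [h1, h2]⟩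

lemma cayley_dist_mulLeft_le (S : Set G) (x a b : G) :
    (cayley G S).dist (x * a) (x * b) ≤ (cayley G S).dist a b := by
  by_cases hr : (cayley G S).Reachable a b
  · obtain ⟨p, hp⟩ := hr.exists_walk_length_eq_dist
    have := SimpleGraph.dist_le (p.map (cayleyMulLeft S x).toHom)
    exact (this.trans (SimpleGraph.Walk.length_map _ _).le).trans hp.le
  · rw [SimpleGraph.dist_eq_zero_of_not_reachable hr] at *
    have : ¬ (cayley G S).Reachable (x * a) (x * b) := by
      intro h
      obtain ⟨p⟩ := h
      refine hr ⟨?_⟩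
      have := p.map (cayleyMulLeft S x⁻¹).toHom
      simpa [cayleyMulLeft, ← mul_assoc] using this
    rw [SimpleGraph.dist_eq_zero_of_not_reachable this]

lemma cayley_dist_mulLeft (S : Set G) (x a b : G) :
    (cayley G S).dist (x * a) (x * b) = (cayley G S).dist a b := by
  refine le_antisymm (cayley_dist_mulLeft_le S x a b) ?_
  have := cayley_dist_mulLeft_le S x⁻¹ (x * a) (x * b)
  simpa [← mul_assoc] using this

lemma cayley_dist_eq_wlen (S : Set G) (a b : G) :
    (cayley G S).dist a b = wlen S (a⁻¹ * b) := by
  have := cayley_dist_mulLeft S a⁻¹ a b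
  simp only [inv_mul_cancel] at this
  exact this.symm

lemma cayley_reachable_one {S : Set G} (hg : Subgroup.closure S = ⊤) (g : G) :
    (cayley G S).Reachable 1 g := by
  have hmem : g ∈ Subgroup.closure S := by rw [hg]; trivial
  induction hmem using Subgroup.closure_induction with
  | mem x hx =>
    rcases eq_or_ne (1 : G) x with h | h
    · rw [← h]
    · exact SimpleGraph.Adj.reachable ⟨h, Or.inl (by simpa using hx)⟩
  | one => rfl
  | mul a b _ _ ha hb =>
    refine ha.trans ?_
    have := hb.map (cayleyMulLeft S a).toHom
    simpa [cayleyMulLeft] using this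
  | inv a _ ha =>
    refine Reachable.symm ?_
    have := ha.map (cayleyMulLeft S a⁻¹).toHom
    simpa [cayleyMulLeft] using this

lemma cayley_connected {S : Set G} (hg : Subgroup.closure S = ⊤) :
    (cayley G S).Connected := by
  rw [connected_iff]
  exact ⟨fun u v => ((cayley_reachable_one hg u).symm.trans (cayley_reachable_one hg v)),
    ⟨1⟩⟩

variable {S : Set G} (hg : Subgroup.closure S = ⊤)

include hg

omit hg in
lemma wlen_one : wlen S (1 : G) = 0 := SimpleGraph.dist_self

lemma wlen_eq_zero_iff {g : G} : wlen S g = 0 ↔ g = 1 := by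
  rw [wlen, (cayley_connected hg).dist_eq_zero_iff, eq_comm]

lemma wlen_triangle (a b : G) : wlen S (a * b) ≤ wlen S a + wlen S b := by
  have h := (cayley_connected hg).dist_triangle (u := (1:G)) (v := a) (w := a * b)
  rw [cayley_dist_eq_wlen S a (a * b)] at h
  simpa [wlen] using h

lemma wlen_adj_le {a b : G} (h : (cayley G S).Adj a b) :
    wlen S b ≤ wlen S a + 1 := by
  have h1 := (cayley_connected hg).dist_triangle (u := (1:G)) (v := a) (w := b)
  have h2 : (cayley G S).dist a b = 1 := SimpleGraph.dist_eq_one_iff_adj.mpr h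
  rw [h2] at h1
  exact h1

/-- One can always step down towards the identity along a geodesic. -/
lemma exists_step_down {g : G} {k : ℕ} (h : wlen S g = k + 1) :
    ∃ g' : G, (cayley G S).Adj g g' ∧ wlen S g' = k := by
  have hr : (cayley G S).Reachable g 1 := (cayley_reachable_one hg g).symm
  obtain ⟨p, hp⟩ := hr.exists_walk_length_eq_dist
  have hd : (cayley G S).dist g 1 = k + 1 := by
    rw [SimpleGraph.dist_comm]; exact h
  rw [hd] at hp
  cases p with
  | nil => simp at hp
  | cons hadj q =>
    rename_i w
    refine ⟨w, hadj, ?_⟩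
    simp only [SimpleGraph.Walk.length_cons, Nat.add_right_cancel_iff] at hp
    have h1 : (cayley G S).dist w 1 ≤ k := hp ▸ SimpleGraph.dist_le q
    have h2 : (cayley G S).dist g 1 ≤ 1 + (cayley G S).dist w 1 := by
      have := (cayley_connected hg).dist_triangle (u := g) (v := w) (w := (1:G))
      have hD : (cayley G S).dist g w = 1 := SimpleGraph.dist_eq_one_iff_adj.mpr hadj
      rw [hD] at this
      exact this
    rw [hd] at h2
    have : wlen S w = (cayley G S).dist w 1 := by rw [wlen, SimpleGraph.dist_comm]
    omega

/-- `u` lies on a geodesic from the identity to `x`. -/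
def geoLe (S : Set G) (u x : G) : Prop :=
  wlen S u + (cayley G S).dist u x = wlen S x

omit hg in
lemma geoLe_refl (x : G) : geoLe S x x := by simp [geoLe, wlen]

omit hg in
lemma geoLe_wlen_le {u x : G} (h : geoLe S u x) : wlen S u ≤ wlen S x := by
  rw [geoLe] at h; omega

lemma geoLe_one {v : G} (h : geoLe S v (1 : G)) : v = 1 := by
  rw [geoLe, wlen_one] at h
  have : wlen S v = 0 := by omega
  exact (wlen_eq_zero_iff hg).mp this

lemma geoLe_trans {a b c : G} (hab : geoLe S a b) (hbc : geoLe S b c) : geoLe S a c := by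
  rw [geoLe] at *
  have h1 : (cayley G S).dist a c ≤ (cayley G S).dist a b + (cayley G S).dist b c :=
    (cayley_connected hg).dist_triangle
  have h2 : wlen S c ≤ wlen S a + (cayley G S).dist a c := by
    have := (cayley_connected hg).dist_triangle (u := (1:G)) (v := a) (w := c)
    simpa [wlen] using this
  omega

lemma geoLe_eq_of_wlen {u x : G} (h : geoLe S u x) (hw : wlen S x ≤ wlen S u) : u = x := by
  rw [geoLe] at h
  have : (cayley G S).dist u x = 0 := by omega
  exact (cayley_connected hg).dist_eq_zero_iff.mp this

/-- Step up along a geodesic towards `x`. -/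
lemma exists_step_up {u x : G} (h : geoLe S u x) (hne : u ≠ x) :
    ∃ u' : G, (cayley G S).Adj u u' ∧ wlen S u' = wlen S u + 1 ∧ geoLe S u' x := by
  have hd : (cayley G S).dist u x ≠ 0 := by
    intro h0
    exact hne ((cayley_connected hg).dist_eq_zero_iff.mp h0)
  obtain ⟨p, hp⟩ := ((cayley_connected hg) u x).exists_walk_length_eq_dist
  cases p with
  | nil => rw [← hp] at hd; simp at hd
  | cons hadj q =>
    rename_i w
    refine ⟨w, hadj, ?_⟩
    simp only [SimpleGraph.Walk.length_cons] at hp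
    have hq : (cayley G S).dist w x ≤ (cayley G S).dist u x - 1 := by
      have := SimpleGraph.dist_le q
      omega
    have h2 : (cayley G S).dist u x ≤ 1 + (cayley G S).dist w x := by
      have h3 := (cayley_connected hg).dist_triangle (u := u) (v := w) (w := x)
      have hD : (cayley G S).dist u w = 1 := SimpleGraph.dist_eq_one_iff_adj.mpr hadj
      rw [hD] at h3
      exact h3
    have hwx : (cayley G S).dist w x = (cayley G S).dist u x - 1 := by omega
    have hwu : wlen S w ≤ wlen S u + 1 := wlen_adj_le hg hadj
    have hwl : wlen S x ≤ wlen S w + (cayley G S).dist w x := by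
      have := (cayley_connected hg).dist_triangle (u := (1:G)) (v := w) (w := x)
      simpa [wlen] using this
    rw [geoLe] at h ⊢
    constructor
    · omega
    · omega

/-- Step down from `v` along a geodesic, staying below `y`. -/
lemma exists_park_down {v y : G} (h : geoLe S v y) {k : ℕ} (hv : wlen S v = k + 1) :
    ∃ v' : G, (cayley G S).Adj v v' ∧ wlen S v' = k ∧ geoLe S v' y := by
  obtain ⟨v', hadj, hw⟩ := exists_step_down hg hv
  refine ⟨v', hadj, hw, geoLe_trans hg ?_ h⟩
  rw [geoLe, hv, hw]
  have : (cayley G S).dist v' v = 1 := SimpleGraph.dist_eq_one_iff_adj.mpr hadj.symm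
  omega

omit hg in
/-- Balls are finite when the generating set is finite. -/
lemma ball_finite (hS : S.Finite) (hg : Subgroup.closure S = ⊤) (m : ℕ) :
    {g : G | wlen S g ≤ m}.Finite := by
  induction m with
  | zero =>
    refine Set.Finite.subset (Set.finite_singleton (1 : G)) ?_
    intro g hgm
    simp only [Set.mem_setOf_eq, Nat.le_zero] at hgm
    simp [(wlen_eq_zero_iff hg).mp hgm]
  | succ m ih =>
    have hsub : {g : G | wlen S g ≤ m + 1} ⊆
        {g : G | wlen S g ≤ m} ∪
          ⋃ h ∈ {g : G | wlen S g ≤ m},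
            ((fun s => h * s) '' S ∪ (fun s => h * s⁻¹) '' S) := by
      intro g hgm
      simp only [Set.mem_setOf_eq] at hgm
      rcases Nat.lt_or_ge (wlen S g) (m + 1) with hlt | hge
      · exact Or.inl (by simpa using Nat.lt_succ_iff.mp hlt)
      · have heq : wlen S g = m + 1 := le_antisymm hgm hge
        obtain ⟨g', hadj, hw⟩ := exists_step_down hg heq
        refine Or.inr ?_
        refine Set.mem_biUnion (show g' ∈ {g : G | wlen S g ≤ m} by simp [hw]) ?_
        rcases hadj.2 with hs | hs
        · exact Or.inr ⟨g⁻¹ * g', hs, by group⟩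
        · exact Or.inl ⟨g'⁻¹ * g, hs, by simp⟩
    exact Set.Finite.subset (ih.union (ih.biUnion
      (fun h _ => (hS.image _).union (hS.image _)))) hsub

/-- In an infinite group, spheres of every radius are nonempty. -/
lemma exists_wlen_eq [Infinite G] (hS : S.Finite) (k : ℕ) :
    ∃ g : G, wlen S g = k := by
  have descend : ∀ m : ℕ, ∀ g : G, wlen S g = m → ∀ j, j ≤ m → ∃ h : G, wlen S h = j := by
    intro m
    induction m with
    | zero => intro g hgl j hj; exact ⟨g, by omega⟩
    | succ m ih =>
      intro g hgl j hj
      rcases Nat.lt_or_ge j (m + 1) with hlt | hge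
      · obtain ⟨g', _, hw⟩ := exists_step_down hg hgl
        exact ih g' hw j (by omega)
      · exact ⟨g, by omega⟩
  by_contra hcon
  push_neg at hcon
  have hbd : ∀ g : G, wlen S g ≤ k := by
    intro g
    by_contra hgt
    push_neg at hgt
    obtain ⟨h, hh⟩ := descend (wlen S g) g rfl k (by omega)
    exact hcon h hh
  have : (Set.univ : Set G).Finite :=
    Set.Finite.subset (ball_finite hS hg k) (fun g _ => hbd g)
  exact Set.infinite_univ this

/-- A geodesic chain `1 = c 0, c 1, …, c k` with `wlen (c i) = i`. -/
lemma exists_chain [Infinite G] (hS : S.Finite) (k : ℕ) :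
    ∃ c : ℕ → G, c 0 = 1 ∧ (∀ i, i < k → (cayley G S).Adj (c i) (c (i + 1))) ∧
      (∀ i, i ≤ k → wlen S (c i) = i) := by
  classical
  have main : ∀ m : ℕ, ∀ g : G, wlen S g = m →
      ∃ c : ℕ → G, c 0 = 1 ∧ c m = g ∧ (∀ i, i < m → (cayley G S).Adj (c i) (c (i + 1))) ∧
        (∀ i, i ≤ m → wlen S (c i) = i) := by
    intro m
    induction m with
    | zero =>
      intro g hgl
      have hg1 : g = 1 := (wlen_eq_zero_iff hg).mp hgl
      exact ⟨fun _ => 1, rfl, hg1.symm, fun i hi => absurd hi (by omega),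
        fun i hi => by simp [Nat.le_zero.mp hi, wlen_one]⟩
    | succ m ih =>
      intro g hgl
      obtain ⟨g', hadj, hw⟩ := exists_step_down hg hgl
      obtain ⟨c, hc0, hcm, hcadj, hcw⟩ := ih g' hw
      refine ⟨Function.update c (m + 1) g, ?_, ?_, ?_, ?_⟩
      · rw [Function.update_of_ne (by omega)]; exact hc0
      · rw [Function.update_self]
      · intro i hi
        rcases Nat.lt_or_ge i m with him | him
        · rw [Function.update_of_ne (by omega), Function.update_of_ne (by omega)]
          exact hcadj i him
        · have : i = m := by omega
          subst this
          rw [Function.update_of_ne (by omega), Function.update_self, hcm]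
          exact hadj.symm
      · intro i hi
        rcases Nat.lt_or_ge i (m + 1) with him | him
        · rw [Function.update_of_ne (by omega)]
          exact hcw i (by omega)
        · have : i = m + 1 := by omega
          subst this
          rw [Function.update_self]
          exact hgl
  obtain ⟨g2, hg2⟩ := exists_wlen_eq hg hS k
  obtain ⟨c, h0, _, hadj, hw⟩ := main k g2 hg2
  exact ⟨c, h0, hadj, hw⟩

end Generic

section ConnIn

variable {G : Type*} [Group G] {S : Set G} {A B : Set G}

lemma connectedIn_refl {x : G} (hx : x ∈ A) : connectedIn S A x x :=
  ⟨SimpleGraph.Walk.nil, by simpa using hx⟩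

lemma connectedIn_symm {x y : G} (h : connectedIn S A x y) : connectedIn S A y x := by
  obtain ⟨w, hw⟩ := h
  exact ⟨w.reverse, fun v hv => hw v (by
    rwa [SimpleGraph.Walk.support_reverse, List.mem_reverse] at hv)⟩

lemma connectedIn_trans {x y z : G} (h1 : connectedIn S A x y) (h2 : connectedIn S A y z) :
    connectedIn S A x z := by
  obtain ⟨w1, hw1⟩ := h1
  obtain ⟨w2, hw2⟩ := h2
  refine ⟨w1.append w2, fun v hv => ?_⟩
  rcases (SimpleGraph.Walk.mem_support_append_iff _ _).mp hv with h | h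
  · exact hw1 v h
  · exact hw2 v h

lemma connectedIn_step {x y : G} (h : (cayley G S).Adj x y) (hx : x ∈ A) (hy : y ∈ A) :
    connectedIn S A x y := by
  refine ⟨SimpleGraph.Walk.cons h SimpleGraph.Walk.nil, fun v hv => ?_⟩
  simp only [SimpleGraph.Walk.support_cons, SimpleGraph.Walk.support_nil, List.mem_cons,
    List.not_mem_nil, or_false] at hv
  rcases hv with rfl | rfl
  · exact hx
  · exact hy

lemma connectedIn_mono {x y : G} (hAB : A ⊆ B) (h : connectedIn S A x y) :
    connectedIn S B x y := by
  obtain ⟨w, hw⟩ := h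
  exact ⟨w, fun v hv => hAB (hw v hv)⟩

lemma connectedIn_mem_left {x y : G} (h : connectedIn S A x y) : x ∈ A := by
  obtain ⟨w, hw⟩ := h
  exact hw x w.start_mem_support

lemma connectedIn_mem_right {x y : G} (h : connectedIn S A x y) : y ∈ A := by
  obtain ⟨w, hw⟩ := h
  exact hw y w.end_mem_support

lemma reachable_induce_of_walk :
    ∀ {x y : G} (w : (cayley G S).Walk x y), (∀ v ∈ w.support, v ∈ A) →
      ∀ (hx : x ∈ A) (hy : y ∈ A),
        ((cayley G S).induce A).Reachable ⟨x, hx⟩ ⟨y, hy⟩ := by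
  intro x y w
  induction w with
  | nil => exact fun _ _ _ => SimpleGraph.Reachable.refl _
  | @cons u c v h q ih =>
    intro hs hx hy
    have hc : c ∈ A := hs c (by simp)
    have hadj : ((cayley G S).induce A).Adj ⟨u, hx⟩ ⟨c, hc⟩ := h
    exact hadj.reachable.trans (ih (fun v hv => hs v (by simp [hv])) hc hy)

lemma reachable_induce_of_connectedIn {x y : G} (h : connectedIn S A x y)
    (hx : x ∈ A) (hy : y ∈ A) :
    ((cayley G S).induce A).Reachable ⟨x, hx⟩ ⟨y, hy⟩ := by
  obtain ⟨w, hw⟩ := h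
  exact reachable_induce_of_walk w hw hx hy

lemma connectedIn_of_reachable_induce {x y : G} {hx : x ∈ A} {hy : y ∈ A}
    (h : ((cayley G S).induce A).Reachable ⟨x, hx⟩ ⟨y, hy⟩) : connectedIn S A x y := by
  obtain ⟨w⟩ := h
  refine ⟨w.map ⟨Subtype.val, fun hadj => hadj⟩, fun v hv => ?_⟩
  rw [SimpleGraph.Walk.support_map, List.mem_map] at hv
  obtain ⟨⟨v', hv'⟩, _, rfl⟩ := hv
  exact hv'

end ConnIn

section Product

variable {G₁ G₂ : Type*} [Group G₁] [Group G₂] {S₁ : Set G₁} {S₂ : Set G₂}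

lemma mem_sumGen_iff {x : G₁ × G₂} :
    x ∈ sumGen S₁ S₂ ↔ (x.1 ∈ S₁ ∧ x.2 = 1) ∨ (x.1 = 1 ∧ x.2 ∈ S₂) := by
  constructor
  · rintro (⟨s, hs, rfl⟩ | ⟨s, hs, rfl⟩)
    · exact Or.inl ⟨hs, rfl⟩
    · exact Or.inr ⟨rfl, hs⟩
  · rintro (⟨h1, h2⟩ | ⟨h1, h2⟩)
    · exact Or.inl ⟨x.1, h1, Prod.ext_iff.mpr ⟨rfl, h2.symm⟩⟩
    · exact Or.inr ⟨x.2, h2, Prod.ext_iff.mpr ⟨h1.symm, rfl⟩⟩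

lemma adj_sum_iff {a b : G₁ × G₂} :
    (cayley (G₁ × G₂) (sumGen S₁ S₂)).Adj a b ↔
      ((cayley G₁ S₁).Adj a.1 b.1 ∧ a.2 = b.2) ∨
        (a.1 = b.1 ∧ (cayley G₂ S₂).Adj a.2 b.2) := by
  constructor
  · rintro ⟨hne, hs⟩
    rcases hs with h | h <;> rw [mem_sumGen_iff] at h
    · rcases h with ⟨h1, h2⟩ | ⟨h1, h2⟩
      · have hb2 : a.2 = b.2 := inv_mul_eq_one.mp h2
        exact Or.inl ⟨⟨fun hh => hne (Prod.ext_iff.mpr ⟨hh, hb2⟩), Or.inl h1⟩, hb2⟩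
      · have hb1 : a.1 = b.1 := inv_mul_eq_one.mp h1
        exact Or.inr ⟨hb1, ⟨fun hh => hne (Prod.ext_iff.mpr ⟨hb1, hh⟩), Or.inl h2⟩⟩
    · rcases h with ⟨h1, h2⟩ | ⟨h1, h2⟩
      · have hb2 : b.2 = a.2 := inv_mul_eq_one.mp h2
        exact Or.inl ⟨⟨fun hh => hne (Prod.ext_iff.mpr ⟨hh, hb2.symm⟩), Or.inr h1⟩, hb2.symm⟩
      · have hb1 : b.1 = a.1 := inv_mul_eq_one.mp h1
        exact Or.inr ⟨hb1.symm, ⟨fun hh => hne (Prod.ext_iff.mpr ⟨hb1.symm, hh⟩), Or.inr h2⟩⟩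
  · rintro (⟨⟨hne, hs⟩, he⟩ | ⟨he, ⟨hne, hs⟩⟩)
    · refine ⟨fun h => hne (congrArg Prod.fst h), ?_⟩
      rcases hs with h | h
      · exact Or.inl (mem_sumGen_iff.mpr (Or.inl ⟨h, by simp [he.symm]⟩))
      · exact Or.inr (mem_sumGen_iff.mpr (Or.inl ⟨h, by simp [he]⟩))
    · refine ⟨fun h => hne (congrArg Prod.snd h), ?_⟩
      rcases hs with h | h
      · exact Or.inl (mem_sumGen_iff.mpr (Or.inr ⟨by simp [he.symm], h⟩))
      · exact Or.inr (mem_sumGen_iff.mpr (Or.inr ⟨by simp [he], h⟩))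

/-- Moving only in the first coordinate is a graph homomorphism. -/
def homFst (b : G₂) : cayley G₁ S₁ →g cayley (G₁ × G₂) (sumGen S₁ S₂) where
  toFun := fun a => (a, b)
  map_rel' := fun h => adj_sum_iff.mpr (Or.inl ⟨h, rfl⟩)

/-- Moving only in the second coordinate is a graph homomorphism. -/
def homSnd (a : G₁) : cayley G₂ S₂ →g cayley (G₁ × G₂) (sumGen S₁ S₂) where
  toFun := fun b => (a, b)
  map_rel' := fun h => adj_sum_iff.mpr (Or.inr ⟨rfl, h⟩)

variable (hg1 : Subgroup.closure S₁ = ⊤) (hg2 : Subgroup.closure S₂ = ⊤)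

include hg1 hg2

lemma dist_sum_ge {a b : G₁ × G₂} (w : (cayley (G₁ × G₂) (sumGen S₁ S₂)).Walk a b) :
    (cayley G₁ S₁).dist a.1 b.1 + (cayley G₂ S₂).dist a.2 b.2 ≤ w.length := by
  induction w with
  | nil => simp
  | @cons u c v h q ih =>
    rcases adj_sum_iff.mp h with ⟨h1, h2⟩ | ⟨h1, h2⟩
    · have t1 : (cayley G₁ S₁).dist u.1 v.1 ≤ 1 + (cayley G₁ S₁).dist c.1 v.1 := by
        have ht := (cayley_connected hg1).dist_triangle (u := u.1) (v := c.1) (w := v.1)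
        rwa [SimpleGraph.dist_eq_one_iff_adj.mpr h1] at ht
      have t2 : (cayley G₂ S₂).dist u.2 v.2 = (cayley G₂ S₂).dist c.2 v.2 := by rw [h2]
      simp only [SimpleGraph.Walk.length_cons]
      omega
    · have t1 : (cayley G₁ S₁).dist u.1 v.1 = (cayley G₁ S₁).dist c.1 v.1 := by rw [h1]
      have t2 : (cayley G₂ S₂).dist u.2 v.2 ≤ 1 + (cayley G₂ S₂).dist c.2 v.2 := by
        have ht := (cayley_connected hg2).dist_triangle (u := u.2) (v := c.2) (w := v.2)
        rwa [SimpleGraph.dist_eq_one_iff_adj.mpr h2] at ht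
      simp only [SimpleGraph.Walk.length_cons]
      omega

lemma wlen_sum (g : G₁ × G₂) :
    wlen (sumGen S₁ S₂) g = wlen S₁ g.1 + wlen S₂ g.2 := by
  obtain ⟨p1, hp1⟩ := (cayley_reachable_one hg1 g.1).exists_walk_length_eq_dist
  obtain ⟨p2, hp2⟩ := (cayley_reachable_one hg2 g.2).exists_walk_length_eq_dist
  have hlen : ((p1.map (homFst (1:G₂))).append (p2.map (homSnd g.1))).length =
      wlen S₁ g.1 + wlen S₂ g.2 := by
    have e1 := SimpleGraph.Walk.length_map (homFst (S₁ := S₁) (S₂ := S₂) (1:G₂)) p1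
    have e2 := SimpleGraph.Walk.length_map (homSnd (S₁ := S₁) (S₂ := S₂) g.1) p2
    have e3 : p1.length + p2.length = wlen S₁ g.1 + wlen S₂ g.2 := by rw [hp1, hp2]; rfl
    exact (SimpleGraph.Walk.length_append _ _).trans ((congrArg₂ (· + ·) e1 e2).trans e3)
  refine le_antisymm ?_ ?_
  · have := SimpleGraph.dist_le ((p1.map (homFst (1:G₂))).append (p2.map (homSnd g.1)))
    rw [hlen] at this
    exact this
  · have hreach : (cayley (G₁ × G₂) (sumGen S₁ S₂)).Reachable 1 g :=
      ⟨(p1.map (homFst (1:G₂))).append (p2.map (homSnd g.1))⟩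
    obtain ⟨ws, hws⟩ := hreach.exists_walk_length_eq_dist
    have := dist_sum_ge hg1 hg2 ws
    rw [hws] at this
    simpa [wlen] using this

end Product

section Main

variable {G₁ G₂ : Type*} [Group G₁] [Group G₂] {S₁ : Set G₁} {S₂ : Set G₂}

/-- The annulus of radii `[n, n+1]` in the product. -/
def Aset (S₁ : Set G₁) (S₂ : Set G₂) (n : ℕ) : Set (G₁ × G₂) :=
  wAnnulus (sumGen S₁ S₂) n 1

/-- The complement of the open ball of radius `n` in the product. -/
def Cset (S₁ : Set G₁) (S₂ : Set G₂) (n : ℕ) : Set (G₁ × G₂) :=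
  {g | n ≤ wlen (sumGen S₁ S₂) g}

/-- `g` is joined inside the annulus to a point one of whose coordinates has length `≥ n`. -/
def ReachH (S₁ : Set G₁) (S₂ : Set G₂) (n : ℕ) (g : G₁ × G₂) : Prop :=
  ∃ z : G₁ × G₂, (n ≤ wlen S₁ z.1 ∨ n ≤ wlen S₂ z.2) ∧
    connectedIn (sumGen S₁ S₂) (Aset S₁ S₂ n) g z

lemma Aset_subset_Cset {n : ℕ} : Aset S₁ S₂ n ⊆ Cset S₁ S₂ n := fun _ h => h.1

lemma ReachH_conn {n : ℕ} {g g' : G₁ × G₂}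
    (h : connectedIn (sumGen S₁ S₂) (Aset S₁ S₂ n) g g') (hR : ReachH S₁ S₂ n g') :
    ReachH S₁ S₂ n g := by
  obtain ⟨z, hz, hc⟩ := hR
  exact ⟨z, hz, connectedIn_trans h hc⟩

lemma adjP_fst {a a' : G₁} (h : (cayley G₁ S₁).Adj a a') (b : G₂) :
    (cayley (G₁ × G₂) (sumGen S₁ S₂)).Adj (a, b) (a', b) :=
  adj_sum_iff.mpr (Or.inl ⟨h, rfl⟩)

lemma adjP_snd {b b' : G₂} (h : (cayley G₂ S₂).Adj b b') (a : G₁) :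
    (cayley (G₁ × G₂) (sumGen S₁ S₂)).Adj (a, b) (a, b') :=
  adj_sum_iff.mpr (Or.inr ⟨rfl, h⟩)

variable (hg1 : Subgroup.closure S₁ = ⊤) (hg2 : Subgroup.closure S₂ = ⊤) {n : ℕ}

include hg1 hg2

lemma mem_Aset {a : G₁} {b : G₂} :
    (a, b) ∈ Aset S₁ S₂ n ↔
      n ≤ wlen S₁ a + wlen S₂ b ∧ wlen S₁ a + wlen S₂ b ≤ n + 1 := by
  show n ≤ wlen (sumGen S₁ S₂) (a, b) ∧ wlen (sumGen S₁ S₂) (a, b) ≤ n + 1 ↔ _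
  rw [wlen_sum hg1 hg2]

lemma mem_Cset {a : G₁} {b : G₂} :
    (a, b) ∈ Cset S₁ S₂ n ↔ n ≤ wlen S₁ a + wlen S₂ b := by
  show n ≤ wlen (sumGen S₁ S₂) (a, b) ↔ _
  rw [wlen_sum hg1 hg2]

/-- Unpark the first coordinate completely, parking the second coordinate as needed. -/
lemma swap1 (x : G₁) (y : G₂) :
    ∀ (d : ℕ) (u : G₁) (v : G₂), (cayley G₁ S₁).dist u x = d → geoLe S₁ u x →
      geoLe S₂ v y → (u, v) ∈ Aset S₁ S₂ n →
      ReachH S₁ S₂ n (u, v) ∨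
        ∃ v', geoLe S₂ v' y ∧ (x, v') ∈ Aset S₁ S₂ n ∧
          connectedIn (sumGen S₁ S₂) (Aset S₁ S₂ n) (u, v) (x, v') := by
  intro d
  induction d with
  | zero =>
    intro u v hd hux hvy hA
    have : u = x := (cayley_connected hg1).dist_eq_zero_iff.mp hd
    subst this
    exact Or.inr ⟨v, hvy, hA, connectedIn_refl hA⟩
  | succ d ih =>
    intro u v hd hux hvy hA
    have hne : u ≠ x := by
      intro h
      subst h
      rw [SimpleGraph.dist_self] at hd
      omega
    obtain ⟨u', hadj, hwu', hgeo'⟩ := exists_step_up hg1 hux hne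
    have hd' : (cayley G₁ S₁).dist u' x = d := by
      have e1 := hux
      have e2 := hgeo'
      rw [geoLe] at e1 e2
      omega
    have hAm := (mem_Aset hg1 hg2).mp hA
    rcases Nat.lt_or_ge (wlen S₁ u + wlen S₂ v) (n + 1) with hl | hl
    · -- level is `n`: go up in the first coordinate
      have hA' : (u', v) ∈ Aset S₁ S₂ n := (mem_Aset hg1 hg2).mpr (by omega)
      have hstep := connectedIn_step (adjP_fst (S₂ := S₂) hadj v) hA hA'
      rcases ih u' v hd' hgeo' hvy hA' with hR | ⟨v', k1, k2, k3⟩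
      · exact Or.inl (ReachH_conn hstep hR)
      · exact Or.inr ⟨v', k1, k2, connectedIn_trans hstep k3⟩
    · -- level is `n+1`
      rcases Nat.eq_zero_or_pos (wlen S₂ v) with hv0 | hvpos
      · exact Or.inl ⟨(u, v), Or.inl (show n ≤ wlen S₁ u by omega), connectedIn_refl hA⟩
      · obtain ⟨k, hk⟩ : ∃ k, wlen S₂ v = k + 1 := ⟨wlen S₂ v - 1, by omega⟩
        obtain ⟨w, hadj2, hwv, hgeo2⟩ := exists_park_down hg2 hvy hk
        have hA1 : (u, w) ∈ Aset S₁ S₂ n := (mem_Aset hg1 hg2).mpr (by omega)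
        have hA2 : (u', w) ∈ Aset S₁ S₂ n := (mem_Aset hg1 hg2).mpr (by omega)
        have c1 := connectedIn_step (adjP_snd (S₁ := S₁) hadj2 u) hA hA1
        have c2 := connectedIn_step (adjP_fst (S₂ := S₂) hadj w) hA1 hA2
        rcases ih u' w hd' hgeo' hgeo2 hA2 with hR | ⟨v', k1, k2, k3⟩
        · exact Or.inl (ReachH_conn (connectedIn_trans c1 c2) hR)
        · exact Or.inr ⟨v', k1, k2,
            connectedIn_trans (connectedIn_trans c1 c2) k3⟩

/-- Unpark the second coordinate completely, parking the first coordinate as needed. -/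
lemma swap2 (x : G₁) (y : G₂) :
    ∀ (d : ℕ) (u : G₁) (v : G₂), (cayley G₂ S₂).dist v y = d → geoLe S₁ u x →
      geoLe S₂ v y → (u, v) ∈ Aset S₁ S₂ n →
      ReachH S₁ S₂ n (u, v) ∨
        ∃ u', geoLe S₁ u' x ∧ (u', y) ∈ Aset S₁ S₂ n ∧
          connectedIn (sumGen S₁ S₂) (Aset S₁ S₂ n) (u, v) (u', y) := by
  intro d
  induction d with
  | zero =>
    intro u v hd hux hvy hA
    have : v = y := (cayley_connected hg2).dist_eq_zero_iff.mp hd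
    subst this
    exact Or.inr ⟨u, hux, hA, connectedIn_refl hA⟩
  | succ d ih =>
    intro u v hd hux hvy hA
    have hne : v ≠ y := by
      intro h
      subst h
      rw [SimpleGraph.dist_self] at hd
      omega
    obtain ⟨v', hadj, hwv', hgeo'⟩ := exists_step_up hg2 hvy hne
    have hd' : (cayley G₂ S₂).dist v' y = d := by
      have e1 := hvy
      have e2 := hgeo'
      rw [geoLe] at e1 e2
      omega
    have hAm := (mem_Aset hg1 hg2).mp hA
    rcases Nat.lt_or_ge (wlen S₁ u + wlen S₂ v) (n + 1) with hl | hl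
    · have hA' : (u, v') ∈ Aset S₁ S₂ n := (mem_Aset hg1 hg2).mpr (by omega)
      have hstep := connectedIn_step (adjP_snd (S₁ := S₁) hadj u) hA hA'
      rcases ih u v' hd' hux hgeo' hA' with hR | ⟨u', k1, k2, k3⟩
      · exact Or.inl (ReachH_conn hstep hR)
      · exact Or.inr ⟨u', k1, k2, connectedIn_trans hstep k3⟩
    · rcases Nat.eq_zero_or_pos (wlen S₁ u) with hu0 | hupos
      · exact Or.inl ⟨(u, v), Or.inr (show n ≤ wlen S₂ v by omega), connectedIn_refl hA⟩
      · obtain ⟨k, hk⟩ : ∃ k, wlen S₁ u = k + 1 := ⟨wlen S₁ u - 1, by omega⟩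
        obtain ⟨w, hadj2, hwu, hgeo2⟩ := exists_park_down hg1 hux hk
        have hA1 : (w, v) ∈ Aset S₁ S₂ n := (mem_Aset hg1 hg2).mpr (by omega)
        have hA2 : (w, v') ∈ Aset S₁ S₂ n := (mem_Aset hg1 hg2).mpr (by omega)
        have c1 := connectedIn_step (adjP_fst (S₂ := S₂) hadj2 v) hA hA1
        have c2 := connectedIn_step (adjP_snd (S₁ := S₁) hadj w) hA1 hA2
        rcases ih w v' hd' hgeo2 hgeo' hA2 with hR | ⟨u', k1, k2, k3⟩
        · exact Or.inl (ReachH_conn (connectedIn_trans c1 c2) hR)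
        · exact Or.inr ⟨u', k1, k2,
            connectedIn_trans (connectedIn_trans c1 c2) k3⟩

/-- Simulate one move of the first coordinate. -/
lemma stepA_fst {x x₂ : G₁} {y : G₂} (hadj : (cayley G₁ S₁).Adj x x₂)
    (hC : n ≤ wlen S₁ x₂ + wlen S₂ y) {u : G₁} {v : G₂}
    (hux : geoLe S₁ u x) (hvy : geoLe S₂ v y) (hA : (u, v) ∈ Aset S₁ S₂ n) :
    ReachH S₁ S₂ n (u, v) ∨
      ∃ u₂ v₂, geoLe S₁ u₂ x₂ ∧ geoLe S₂ v₂ y ∧ (u₂, v₂) ∈ Aset S₁ S₂ n ∧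
        connectedIn (sumGen S₁ S₂) (Aset S₁ S₂ n) (u, v) (u₂, v₂) := by
  rcases swap1 hg1 hg2 x y _ u v rfl hux hvy hA with hR | ⟨v', hv'y, hA', hc⟩
  · exact Or.inl hR
  · have hAm := (mem_Aset hg1 hg2).mp hA'
    have hb1 : wlen S₁ x₂ ≤ wlen S₁ x + 1 := wlen_adj_le hg1 hadj
    have hb2 : wlen S₁ x ≤ wlen S₁ x₂ + 1 := wlen_adj_le hg1 hadj.symm
    rcases Nat.lt_or_ge (wlen S₁ x₂ + wlen S₂ v') n with hlow | hge
    · -- level would drop to `n-1`: unpark the second coordinate one step first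
      have hvne : v' ≠ y := by
        intro h
        subst h
        omega
      obtain ⟨w, hadjw, hww, hgw⟩ := exists_step_up hg2 hv'y hvne
      have hA1 : (x, w) ∈ Aset S₁ S₂ n := (mem_Aset hg1 hg2).mpr (by omega)
      have hA2 : (x₂, w) ∈ Aset S₁ S₂ n := (mem_Aset hg1 hg2).mpr (by omega)
      have c1 := connectedIn_step (adjP_snd (S₁ := S₁) hadjw x) hA' hA1
      have c2 := connectedIn_step (adjP_fst (S₂ := S₂) hadj w) hA1 hA2
      exact Or.inr ⟨x₂, w, geoLe_refl x₂, hgw, hA2,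
        connectedIn_trans hc (connectedIn_trans c1 c2)⟩
    · rcases Nat.lt_or_ge (n + 1) (wlen S₁ x₂ + wlen S₂ v') with hhigh | hle
      · -- level would rise to `n+2`: park the second coordinate one step first
        rcases Nat.eq_zero_or_pos (wlen S₂ v') with hv0 | hvpos
        · exact Or.inl (ReachH_conn hc
            ⟨(x, v'), Or.inl (show n ≤ wlen S₁ x by omega), connectedIn_refl hA'⟩)
        · obtain ⟨k, hk⟩ : ∃ k, wlen S₂ v' = k + 1 := ⟨wlen S₂ v' - 1, by omega⟩
          obtain ⟨w, hadjw, hww, hgw⟩ := exists_park_down hg2 hv'y hk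
          have hA1 : (x, w) ∈ Aset S₁ S₂ n := (mem_Aset hg1 hg2).mpr (by omega)
          have hA2 : (x₂, w) ∈ Aset S₁ S₂ n := (mem_Aset hg1 hg2).mpr (by omega)
          have c1 := connectedIn_step (adjP_snd (S₁ := S₁) hadjw x) hA' hA1
          have c2 := connectedIn_step (adjP_fst (S₂ := S₂) hadj w) hA1 hA2
          exact Or.inr ⟨x₂, w, geoLe_refl x₂, hgw, hA2,
            connectedIn_trans hc (connectedIn_trans c1 c2)⟩
      · -- level stays within `[n, n+1]`: move directly
        have hA2 : (x₂, v') ∈ Aset S₁ S₂ n := (mem_Aset hg1 hg2).mpr (by omega)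
        have c2 := connectedIn_step (adjP_fst (S₂ := S₂) hadj v') hA' hA2
        exact Or.inr ⟨x₂, v', geoLe_refl x₂, hv'y, hA2, connectedIn_trans hc c2⟩

/-- Simulate one move of the second coordinate. -/
lemma stepA_snd {y y₂ : G₂} {x : G₁} (hadj : (cayley G₂ S₂).Adj y y₂)
    (hC : n ≤ wlen S₁ x + wlen S₂ y₂) {u : G₁} {v : G₂}
    (hux : geoLe S₁ u x) (hvy : geoLe S₂ v y) (hA : (u, v) ∈ Aset S₁ S₂ n) :
    ReachH S₁ S₂ n (u, v) ∨
      ∃ u₂ v₂, geoLe S₁ u₂ x ∧ geoLe S₂ v₂ y₂ ∧ (u₂, v₂) ∈ Aset S₁ S₂ n ∧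
        connectedIn (sumGen S₁ S₂) (Aset S₁ S₂ n) (u, v) (u₂, v₂) := by
  rcases swap2 hg1 hg2 x y _ u v rfl hux hvy hA with hR | ⟨u', hu'x, hA', hc⟩
  · exact Or.inl hR
  · have hAm := (mem_Aset hg1 hg2).mp hA'
    have hb1 : wlen S₂ y₂ ≤ wlen S₂ y + 1 := wlen_adj_le hg2 hadj
    have hb2 : wlen S₂ y ≤ wlen S₂ y₂ + 1 := wlen_adj_le hg2 hadj.symm
    rcases Nat.lt_or_ge (wlen S₁ u' + wlen S₂ y₂) n with hlow | hge
    · have hune : u' ≠ x := by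
        intro h
        subst h
        omega
      obtain ⟨w, hadjw, hww, hgw⟩ := exists_step_up hg1 hu'x hune
      have hA1 : (w, y) ∈ Aset S₁ S₂ n := (mem_Aset hg1 hg2).mpr (by omega)
      have hA2 : (w, y₂) ∈ Aset S₁ S₂ n := (mem_Aset hg1 hg2).mpr (by omega)
      have c1 := connectedIn_step (adjP_fst (S₂ := S₂) hadjw y) hA' hA1
      have c2 := connectedIn_step (adjP_snd (S₁ := S₁) hadj w) hA1 hA2
      exact Or.inr ⟨w, y₂, hgw, geoLe_refl y₂, hA2,
        connectedIn_trans hc (connectedIn_trans c1 c2)⟩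
    · rcases Nat.lt_or_ge (n + 1) (wlen S₁ u' + wlen S₂ y₂) with hhigh | hle
      · rcases Nat.eq_zero_or_pos (wlen S₁ u') with hu0 | hupos
        · exact Or.inl (ReachH_conn hc
            ⟨(u', y), Or.inr (show n ≤ wlen S₂ y by omega), connectedIn_refl hA'⟩)
        · obtain ⟨k, hk⟩ : ∃ k, wlen S₁ u' = k + 1 := ⟨wlen S₁ u' - 1, by omega⟩
          obtain ⟨w, hadjw, hww, hgw⟩ := exists_park_down hg1 hu'x hk
          have hA1 : (w, y) ∈ Aset S₁ S₂ n := (mem_Aset hg1 hg2).mpr (by omega)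
          have hA2 : (w, y₂) ∈ Aset S₁ S₂ n := (mem_Aset hg1 hg2).mpr (by omega)
          have c1 := connectedIn_step (adjP_fst (S₂ := S₂) hadjw y) hA' hA1
          have c2 := connectedIn_step (adjP_snd (S₁ := S₁) hadj w) hA1 hA2
          exact Or.inr ⟨w, y₂, hgw, geoLe_refl y₂, hA2,
            connectedIn_trans hc (connectedIn_trans c1 c2)⟩
      · have hA2 : (u', y₂) ∈ Aset S₁ S₂ n := (mem_Aset hg1 hg2).mpr (by omega)
        have c2 := connectedIn_step (adjP_snd (S₁ := S₁) hadj u') hA' hA2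
        exact Or.inr ⟨u', y₂, hu'x, geoLe_refl y₂, hA2, connectedIn_trans hc c2⟩

/-- The simulation lemma: a walk in the complement of the ball can be shadowed inside
the annulus, with both coordinates parked along geodesics. -/
lemma sim : ∀ {g h : G₁ × G₂} (w : (cayley (G₁ × G₂) (sumGen S₁ S₂)).Walk g h),
    (∀ z ∈ w.support, z ∈ Cset S₁ S₂ n) →
    ∀ u v, geoLe S₁ u g.1 → geoLe S₂ v g.2 → (u, v) ∈ Aset S₁ S₂ n →
    ReachH S₁ S₂ n (u, v) ∨
      ∃ u' v', geoLe S₁ u' h.1 ∧ geoLe S₂ v' h.2 ∧ (u', v') ∈ Aset S₁ S₂ n ∧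
        connectedIn (sumGen S₁ S₂) (Aset S₁ S₂ n) (u, v) (u', v') := by
  intro g h w
  induction w with
  | nil =>
    intro _ u v k1 k2 hA
    exact Or.inr ⟨u, v, k1, k2, hA, connectedIn_refl hA⟩
  | @cons p q r hadj tail ih =>
    intro hs u v hup hvp hA
    have hqC : q ∈ Cset S₁ S₂ n := hs q (by simp)
    have hqC' : n ≤ wlen S₁ q.1 + wlen S₂ q.2 := by
      have := hqC
      rwa [Cset, Set.mem_setOf_eq, wlen_sum hg1 hg2] at this
    rcases adj_sum_iff.mp hadj with ⟨ha1, ha2⟩ | ⟨ha1, ha2⟩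
    · have hC2 : n ≤ wlen S₁ q.1 + wlen S₂ p.2 := by rw [ha2]; exact hqC'
      rcases stepA_fst hg1 hg2 ha1 hC2 hup hvp hA with hR | ⟨u₂, v₂, k1, k2, k3, k4⟩
      · exact Or.inl hR
      · rcases ih (fun z hz => hs z (by simp [hz])) u₂ v₂ k1 (ha2 ▸ k2) k3 with
          hR | ⟨u', v', m1, m2, m3, m4⟩
        · exact Or.inl (ReachH_conn k4 hR)
        · exact Or.inr ⟨u', v', m1, m2, m3, connectedIn_trans k4 m4⟩
    · have hC2 : n ≤ wlen S₁ p.1 + wlen S₂ q.2 := by rw [ha1]; exact hqC'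
      rcases stepA_snd hg1 hg2 ha2 hC2 hup hvp hA with hR | ⟨u₂, v₂, k1, k2, k3, k4⟩
      · exact Or.inl hR
      · rcases ih (fun z hz => hs z (by simp [hz])) u₂ v₂ (ha1 ▸ k1) k2 k3 with
          hR | ⟨u', v', m1, m2, m3, m4⟩
        · exact Or.inl (ReachH_conn k4 hR)
        · exact Or.inr ⟨u', v', m1, m2, m3, connectedIn_trans k4 m4⟩

lemma mem_infPart_high2 [Infinite G₁] {a : G₁} {b : G₂} (hb : n ≤ wlen S₂ b) :
    (a, b) ∈ infPart (sumGen S₁ S₂) (Cset S₁ S₂ n) := by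
  have hmem : ∀ a' : G₁, (a', b) ∈ Cset S₁ S₂ n := fun a' =>
    (mem_Cset hg1 hg2).mpr (by omega)
  refine ⟨hmem a, ?_⟩
  refine Set.infinite_of_injective_forall_mem
    (f := fun a' : G₁ => (⟨(a', b), hmem a'⟩ : ↥(Cset S₁ S₂ n))) ?_ ?_
  · intro a₁ a₂ h
    have h2' : (a₁, b) = (a₂, b) := Subtype.mk_eq_mk.mp h
    exact (Prod.ext_iff.mp h2').1
  · intro a'
    have hr : (cayley G₁ S₁).Reachable a a' :=
      (cayley_reachable_one hg1 a).symm.trans (cayley_reachable_one hg1 a')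
    obtain ⟨p⟩ := hr
    have hconn : connectedIn (sumGen S₁ S₂) (Cset S₁ S₂ n) (a, b) (a', b) := by
      refine ⟨p.map (homFst b), ?_⟩
      intro z hz
      replace hz : z ∈ (p.map (homFst (S₁ := S₁) (S₂ := S₂) b)).support := hz
      rw [SimpleGraph.Walk.support_map, List.mem_map] at hz
      obtain ⟨z', _, rfl⟩ := hz
      exact (mem_Cset hg1 hg2).mpr (by omega)
    exact reachable_induce_of_connectedIn hconn (hmem a) (hmem a')

lemma mem_infPart_high1 [Infinite G₂] {a : G₁} {b : G₂} (ha : n ≤ wlen S₁ a) :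
    (a, b) ∈ infPart (sumGen S₁ S₂) (Cset S₁ S₂ n) := by
  have hmem : ∀ b' : G₂, (a, b') ∈ Cset S₁ S₂ n := fun b' =>
    (mem_Cset hg1 hg2).mpr (by omega)
  refine ⟨hmem b, ?_⟩
  refine Set.infinite_of_injective_forall_mem
    (f := fun b' : G₂ => (⟨(a, b'), hmem b'⟩ : ↥(Cset S₁ S₂ n))) ?_ ?_
  · intro b₁ b₂ h
    have h2' : (a, b₁) = (a, b₂) := Subtype.mk_eq_mk.mp h
    exact (Prod.ext_iff.mp h2').2
  · intro b'
    have hr : (cayley G₂ S₂).Reachable b b' :=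
      (cayley_reachable_one hg2 b).symm.trans (cayley_reachable_one hg2 b')
    obtain ⟨p⟩ := hr
    have hconn : connectedIn (sumGen S₁ S₂) (Cset S₁ S₂ n) (a, b) (a, b') := by
      refine ⟨p.map (homSnd a), ?_⟩
      intro z hz
      replace hz : z ∈ (p.map (homSnd (S₁ := S₁) (S₂ := S₂) a)).support := hz
      rw [SimpleGraph.Walk.support_map, List.mem_map] at hz
      obtain ⟨z', _, rfl⟩ := hz
      exact (mem_Cset hg1 hg2).mpr (by omega)
    exact reachable_induce_of_connectedIn hconn (hmem b) (hmem b')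

lemma conn_to_high (h1 : S₁.Finite) (h2 : S₂.Finite) {g : G₁ × G₂}
    (hgi : g ∈ infPart (sumGen S₁ S₂) (Cset S₁ S₂ n)) :
    ∃ z : G₁ × G₂, (n ≤ wlen S₁ z.1 ∨ n ≤ wlen S₂ z.2) ∧
      connectedIn (sumGen S₁ S₂) (Cset S₁ S₂ n) g z := by
  obtain ⟨hgC, hinf⟩ := hgi
  have hfinP : ({p : G₁ × G₂ | wlen S₁ p.1 ≤ n ∧ wlen S₂ p.2 ≤ n}).Finite := by
    refine ((ball_finite h1 hg1 n).prod (ball_finite h2 hg2 n)).subset ?_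
    intro p hp
    exact ⟨hp.1, hp.2⟩
  have hfin : (Subtype.val ⁻¹' {p : G₁ × G₂ | wlen S₁ p.1 ≤ n ∧ wlen S₂ p.2 ≤ n} :
      Set ↥(Cset S₁ S₂ n)).Finite :=
    Set.Finite.preimage (Set.injOn_of_injective Subtype.val_injective) hfinP
  obtain ⟨w, hw⟩ := (hinf.diff hfin).nonempty
  obtain ⟨z, hzC⟩ := w
  obtain ⟨hwr, hwbox⟩ := hw
  have hzbox : ¬(wlen S₁ z.1 ≤ n ∧ wlen S₂ z.2 ≤ n) := hwbox
  have hhigh : n ≤ wlen S₁ z.1 ∨ n ≤ wlen S₂ z.2 := by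
    by_contra hcon
    push_neg at hcon
    exact hzbox ⟨by omega, by omega⟩
  exact ⟨z, hhigh, connectedIn_of_reachable_induce hwr⟩

lemma infPart_of_connectedIn {g z : G₁ × G₂}
    (hgi : g ∈ infPart (sumGen S₁ S₂) (Cset S₁ S₂ n))
    (h : connectedIn (sumGen S₁ S₂) (Cset S₁ S₂ n) g z) :
    z ∈ infPart (sumGen S₁ S₂) (Cset S₁ S₂ n) := by
  obtain ⟨hgC, hinf⟩ := hgi
  have hzC : z ∈ Cset S₁ S₂ n := connectedIn_mem_right h
  refine ⟨hzC, ?_⟩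
  have hr := reachable_induce_of_connectedIn h hgC hzC
  have hset : {w : ↥(Cset S₁ S₂ n) |
        ((cayley (G₁ × G₂) (sumGen S₁ S₂)).induce (Cset S₁ S₂ n)).Reachable ⟨z, hzC⟩ w} =
      {w | ((cayley (G₁ × G₂) (sumGen S₁ S₂)).induce (Cset S₁ S₂ n)).Reachable ⟨g, hgC⟩ w} := by
    ext w
    exact ⟨fun hh => hr.trans hh, fun hh => hr.symm.trans hh⟩
  rw [hset]
  exact hinf

lemma reachH_of_infPart [Infinite G₁] [Infinite G₂] (h1 : S₁.Finite) (h2 : S₂.Finite)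
    {g : G₁ × G₂} (hA : g ∈ Aset S₁ S₂ n)
    (hi : g ∈ infPart (sumGen S₁ S₂) (Cset S₁ S₂ n)) : ReachH S₁ S₂ n g := by
  obtain ⟨z, hhigh, hconn⟩ := conn_to_high hg1 hg2 h1 h2 hi
  rcases hhigh with hz1 | hz2
  · obtain ⟨p2⟩ := (cayley_reachable_one hg2 z.2).symm
    have hconn2 : connectedIn (sumGen S₁ S₂) (Cset S₁ S₂ n) z (z.1, 1) := by
      refine ⟨p2.map (homSnd z.1), ?_⟩
      intro w hw
      replace hw : w ∈ (p2.map (homSnd (S₁ := S₁) (S₂ := S₂) z.1)).support := hw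
      rw [SimpleGraph.Walk.support_map, List.mem_map] at hw
      obtain ⟨b', _, rfl⟩ := hw
      exact (mem_Cset hg1 hg2).mpr (by omega)
    obtain ⟨W, hW⟩ := connectedIn_trans hconn hconn2
    rcases sim hg1 hg2 W hW g.1 g.2 (geoLe_refl g.1) (geoLe_refl g.2) hA with
      hR | ⟨u', v', k1, k2, k3, k4⟩
    · exact hR
    · have hv1 : v' = 1 := geoLe_one hg2 k2
      subst hv1
      have hk3 := (mem_Aset hg1 hg2).mp k3
      rw [wlen_one] at hk3
      exact ⟨(u', 1), Or.inl (show n ≤ wlen S₁ u' by omega), k4⟩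
  · obtain ⟨p1⟩ := (cayley_reachable_one hg1 z.1).symm
    have hconn2 : connectedIn (sumGen S₁ S₂) (Cset S₁ S₂ n) z ((1 : G₁), z.2) := by
      refine ⟨p1.map (homFst z.2), ?_⟩
      intro w hw
      replace hw : w ∈ (p1.map (homFst (S₁ := S₁) (S₂ := S₂) z.2)).support := hw
      rw [SimpleGraph.Walk.support_map, List.mem_map] at hw
      obtain ⟨a', _, rfl⟩ := hw
      exact (mem_Cset hg1 hg2).mpr (by omega)
    obtain ⟨W, hW⟩ := connectedIn_trans hconn hconn2
    rcases sim hg1 hg2 W hW g.1 g.2 (geoLe_refl g.1) (geoLe_refl g.2) hA with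
      hR | ⟨u', v', k1, k2, k3, k4⟩
    · exact hR
    · have hu1 : u' = 1 := geoLe_one hg1 k1
      subst hu1
      have hk3 := (mem_Aset hg1 hg2).mp k3
      rw [wlen_one] at hk3
      exact ⟨(1, v'), Or.inr (show n ≤ wlen S₂ v' by omega), k4⟩

lemma transfer1 (c2 : ℕ → G₂)
    (hc2adj : ∀ i, i < n → (cayley G₂ S₂).Adj (c2 i) (c2 (i + 1)))
    (hc2w : ∀ i, i ≤ n → wlen S₂ (c2 i) = i) :
    ∀ k, k ≤ n → ∀ p : G₁, wlen S₁ p = k →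
      connectedIn (sumGen S₁ S₂) (Aset S₁ S₂ n) (p, c2 (n - k)) ((1 : G₁), c2 n) := by
  intro k
  induction k with
  | zero =>
    intro _ p hp
    have hp1 : p = 1 := (wlen_eq_zero_iff hg1).mp hp
    subst hp1
    rw [Nat.sub_zero]
    exact connectedIn_refl
      ((mem_Aset hg1 hg2).mpr (by rw [wlen_one, hc2w n le_rfl]; omega))
  | succ k ih =>
    intro hk p hp
    obtain ⟨p', hadj, hw'⟩ := exists_step_down hg1 hp
    have hj : n - (k + 1) + 1 = n - k := by omega
    have hadjc : (cayley G₂ S₂).Adj (c2 (n - (k + 1))) (c2 (n - k)) := by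
      have := hc2adj (n - (k + 1)) (by omega)
      rwa [hj] at this
    have hA0 : (p, c2 (n - (k + 1))) ∈ Aset S₁ S₂ n :=
      (mem_Aset hg1 hg2).mpr (by rw [hp, hc2w _ (by omega)]; omega)
    have hA1 : (p, c2 (n - k)) ∈ Aset S₁ S₂ n :=
      (mem_Aset hg1 hg2).mpr (by rw [hp, hc2w _ (by omega)]; omega)
    have hA2 : (p', c2 (n - k)) ∈ Aset S₁ S₂ n :=
      (mem_Aset hg1 hg2).mpr (by rw [hw', hc2w _ (by omega)]; omega)
    have s1 := connectedIn_step (adjP_snd (S₁ := S₁) hadjc p) hA0 hA1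
    have s2 := connectedIn_step (adjP_fst (S₂ := S₂) hadj (c2 (n - k))) hA1 hA2
    exact connectedIn_trans s1 (connectedIn_trans s2 (ih (by omega) p' hw'))

lemma transfer2 (c1 : ℕ → G₁)
    (hc1adj : ∀ i, i < n → (cayley G₁ S₁).Adj (c1 i) (c1 (i + 1)))
    (hc1w : ∀ i, i ≤ n → wlen S₁ (c1 i) = i) :
    ∀ k, k ≤ n → ∀ q : G₂, wlen S₂ q = k →
      connectedIn (sumGen S₁ S₂) (Aset S₁ S₂ n) (c1 (n - k), q) (c1 n, (1 : G₂)) := by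
  intro k
  induction k with
  | zero =>
    intro _ q hq
    have hq1 : q = 1 := (wlen_eq_zero_iff hg2).mp hq
    subst hq1
    rw [Nat.sub_zero]
    exact connectedIn_refl
      ((mem_Aset hg1 hg2).mpr (by rw [wlen_one, hc1w n le_rfl]; omega))
  | succ k ih =>
    intro hk q hq
    obtain ⟨q', hadj, hw'⟩ := exists_step_down hg2 hq
    have hj : n - (k + 1) + 1 = n - k := by omega
    have hadjc : (cayley G₁ S₁).Adj (c1 (n - (k + 1))) (c1 (n - k)) := by
      have := hc1adj (n - (k + 1)) (by omega)
      rwa [hj] at this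
    have hA0 : (c1 (n - (k + 1)), q) ∈ Aset S₁ S₂ n :=
      (mem_Aset hg1 hg2).mpr (by rw [hq, hc1w _ (by omega)]; omega)
    have hA1 : (c1 (n - k), q) ∈ Aset S₁ S₂ n :=
      (mem_Aset hg1 hg2).mpr (by rw [hq, hc1w _ (by omega)]; omega)
    have hA2 : (c1 (n - k), q') ∈ Aset S₁ S₂ n :=
      (mem_Aset hg1 hg2).mpr (by rw [hw', hc1w _ (by omega)]; omega)
    have s1 := connectedIn_step (adjP_fst (S₂ := S₂) hadjc q) hA0 hA1
    have s2 := connectedIn_step (adjP_snd (S₁ := S₁) hadj (c1 (n - k))) hA1 hA2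
    exact connectedIn_trans s1 (connectedIn_trans s2 (ih (by omega) q' hw'))

lemma corner (c1 : ℕ → G₁) (c2 : ℕ → G₂) (hc10 : c1 0 = 1) (hc20 : c2 0 = 1)
    (hc1adj : ∀ i, i < n → (cayley G₁ S₁).Adj (c1 i) (c1 (i + 1)))
    (hc1w : ∀ i, i ≤ n → wlen S₁ (c1 i) = i)
    (hc2adj : ∀ i, i < n → (cayley G₂ S₂).Adj (c2 i) (c2 (i + 1)))
    (hc2w : ∀ i, i ≤ n → wlen S₂ (c2 i) = i)
    {z : G₁ × G₂} (hz : z ∈ Aset S₁ S₂ n)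
    (hh : n ≤ wlen S₁ z.1 ∨ n ≤ wlen S₂ z.2) :
    connectedIn (sumGen S₁ S₂) (Aset S₁ S₂ n) z ((1 : G₁), c2 n) := by
  obtain ⟨za, zb⟩ := z
  have hzm := (mem_Aset hg1 hg2).mp hz
  have base : ∀ p : G₁, wlen S₁ p = n →
      connectedIn (sumGen S₁ S₂) (Aset S₁ S₂ n) (p, (1 : G₂)) ((1 : G₁), c2 n) := by
    intro p hp
    have := transfer1 hg1 hg2 c2 hc2adj hc2w n le_rfl p hp
    rwa [Nat.sub_self, hc20] at this
  have base2 : ∀ q : G₂, wlen S₂ q = n →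
      connectedIn (sumGen S₁ S₂) (Aset S₁ S₂ n) ((1 : G₁), q) ((1 : G₁), c2 n) := by
    intro q hq
    have t2 := transfer2 hg1 hg2 c1 hc1adj hc1w n le_rfl q hq
    rw [Nat.sub_self, hc10] at t2
    exact connectedIn_trans t2 (base (c1 n) (hc1w n le_rfl))
  rcases hh with h1' | h2'
  · replace h1' : n ≤ wlen S₁ za := h1'
    rcases Nat.eq_zero_or_pos (wlen S₂ zb) with hb0 | hbpos
    · have hzb : zb = 1 := (wlen_eq_zero_iff hg2).mp hb0
      subst hzb
      rcases Nat.lt_or_ge (wlen S₁ za) (n + 1) with hlt | hge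
      · exact base za (by omega)
      · obtain ⟨p', hadj, hw'⟩ :=
          exists_step_down hg1 (show wlen S₁ za = n + 1 by omega)
        have hA2 : (p', (1 : G₂)) ∈ Aset S₁ S₂ n :=
          (mem_Aset hg1 hg2).mpr (by rw [hw', wlen_one]; omega)
        exact connectedIn_trans
          (connectedIn_step (adjP_fst (S₂ := S₂) hadj 1) hz hA2) (base p' hw')
    · have hbe : wlen S₂ zb = 1 := by omega
      have ha : wlen S₁ za = n := by omega
      have hadjb : (cayley G₂ S₂).Adj zb 1 := by
        have hd : (cayley G₂ S₂).dist 1 zb = 1 := hbe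
        exact (SimpleGraph.dist_eq_one_iff_adj.mp hd).symm
      have hA2 : (za, (1 : G₂)) ∈ Aset S₁ S₂ n :=
        (mem_Aset hg1 hg2).mpr (by rw [ha, wlen_one]; omega)
      exact connectedIn_trans
        (connectedIn_step (adjP_snd (S₁ := S₁) hadjb za) hz hA2) (base za ha)
  · replace h2' : n ≤ wlen S₂ zb := h2'
    rcases Nat.eq_zero_or_pos (wlen S₁ za) with ha0 | hapos
    · have hza : za = 1 := (wlen_eq_zero_iff hg1).mp ha0
      subst hza
      rcases Nat.lt_or_ge (wlen S₂ zb) (n + 1) with hlt | hge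
      · exact base2 zb (by omega)
      · obtain ⟨q', hadj, hw'⟩ :=
          exists_step_down hg2 (show wlen S₂ zb = n + 1 by omega)
        have hA2 : ((1 : G₁), q') ∈ Aset S₁ S₂ n :=
          (mem_Aset hg1 hg2).mpr (by rw [hw', wlen_one]; omega)
        exact connectedIn_trans
          (connectedIn_step (adjP_snd (S₁ := S₁) hadj 1) hz hA2) (base2 q' hw')
    · have hae : wlen S₁ za = 1 := by omega
      have hb : wlen S₂ zb = n := by omega
      have hadja : (cayley G₁ S₁).Adj za 1 := by
        have hd : (cayley G₁ S₁).dist 1 za = 1 := hae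
        exact (SimpleGraph.dist_eq_one_iff_adj.mp hd).symm
      have hA2 : ((1 : G₁), zb) ∈ Aset S₁ S₂ n :=
        (mem_Aset hg1 hg2).mpr (by rw [hb, wlen_one]; omega)
      exact connectedIn_trans
        (connectedIn_step (adjP_fst (S₂ := S₂) hadja zb) hz hA2) (base2 zb hb)

end Main

end Stmt17

/-- For infinite finitely generated groups `G₁, G₂` and the summed generating
set `S₁ ⊥ S₂` of `G₁ × G₂`, the graph `S(n,1)^∞` is connected for every `n`. -/
theorem stmt_17 {G₁ G₂ : Type*} [Group G₁] [Group G₂] [Infinite G₁] [Infinite G₂]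
    (S₁ : Set G₁) (S₂ : Set G₂) (h1 : S₁.Finite) (h2 : S₂.Finite)
    (hg1 : Subgroup.closure S₁ = ⊤) (hg2 : Subgroup.closure S₂ = ⊤) :
    ∀ n : ℕ, SpheresConn (sumGen S₁ S₂) n 1 := by
  intro n
  classical
  obtain ⟨c1, hc10, hc1adj, hc1w⟩ := Stmt17.exists_chain hg1 h1 n
  obtain ⟨c2, hc20, hc2adj, hc2w⟩ := Stmt17.exists_chain hg2 h2 n
  have hanchorA : ((1 : G₁), c2 n) ∈ Stmt17.Aset S₁ S₂ n :=
    (Stmt17.mem_Aset hg1 hg2).mpr (by rw [Stmt17.wlen_one, hc2w n le_rfl]; omega)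
  have hanchorI : ((1 : G₁), c2 n) ∈ infPart (sumGen S₁ S₂) (Stmt17.Cset S₁ S₂ n) :=
    Stmt17.mem_infPart_high2 hg1 hg2 (le_of_eq (hc2w n le_rfl).symm)
  have hanchorS : ((1 : G₁), c2 n) ∈ sphereInf (sumGen S₁ S₂) n 1 := ⟨hanchorA, hanchorI⟩
  have main : ∀ w (hw : w ∈ sphereInf (sumGen S₁ S₂) n 1),
      ((cayley (G₁ × G₂) (sumGen S₁ S₂)).induce (sphereInf (sumGen S₁ S₂) n 1)).Reachable
        ⟨w, hw⟩ ⟨((1 : G₁), c2 n), hanchorS⟩ := by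
    intro w hw
    have hwA : w ∈ Stmt17.Aset S₁ S₂ n := hw.1
    have hwI : w ∈ infPart (sumGen S₁ S₂) (Stmt17.Cset S₁ S₂ n) := hw.2
    have hR := Stmt17.reachH_of_infPart hg1 hg2 h1 h2 hwA hwI
    obtain ⟨z, hzh, hzc⟩ := hR
    have hzA : z ∈ Stmt17.Aset S₁ S₂ n := Stmt17.connectedIn_mem_right hzc
    have hcorner :=
      Stmt17.corner hg1 hg2 c1 c2 hc10 hc20 hc1adj hc1w hc2adj hc2w hzA hzh
    obtain ⟨W, hW⟩ := Stmt17.connectedIn_trans hzc hcorner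
    have hsupp : ∀ p ∈ W.support, p ∈ sphereInf (sumGen S₁ S₂) n 1 := by
      intro p hp
      refine ⟨hW p hp, ?_⟩
      have hcp : connectedIn (sumGen S₁ S₂) (Stmt17.Cset S₁ S₂ n) w p := by
        refine ⟨W.takeUntil p hp, fun q hq => ?_⟩
        exact Stmt17.Aset_subset_Cset (hW q (SimpleGraph.Walk.support_takeUntil_subset W hp hq))
      exact Stmt17.infPart_of_connectedIn hg1 hg2 hwI hcp
    exact Stmt17.reachable_induce_of_walk W hsupp hw hanchorS
  refine (SimpleGraph.connected_iff _).mpr ⟨fun u v => ?_, ⟨⟨_, hanchorS⟩⟩⟩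
  obtain ⟨u, hu⟩ := u
  obtain ⟨v, hv⟩ := v
  exact (main u hu).trans (main v hv).symm
end

section
/- Let G be an infinite group with a finite generating set S. Then every element x ∈ G has retreat depth rd(x) ≤ ⌊|x|/2⌋. Consequently, for every n, |S(2n)| ≤ |S(n)^∞| · |S(n)| and |S(2n+1)| ≤ |S(n+1)^∞| · |S(n)|. -/
variable {G : Type*} [Group G]

variable (Γ L : Type*) [Group Γ] [Group L]

/-!
If `|x⁻¹ y| ≤ |y|`, then every vertex `v` of a geodesic from `x` to `y` satisfies
`|x| + |y| ≤ 2|v| + d(x, y) ≤ 2|v| + |y|`, so the geodesic avoids `B(⌈|x|/2⌉ - 1)`.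
Such `y` exist arbitrarily far out: otherwise left multiplication by `x⁻¹` would strictly
increase the length of every element outside some ball `B(M)`, which keeps all powers `x^j`
inside `B(M)` while pushing `x^{-j} y` to infinity. Hence `x` lies in an infinite component
of the complement of `B(⌈|x|/2⌉ - 1)`, i.e. `rd(x) ≤ ⌊|x|/2⌋`.

For the counting bounds, cut a geodesic from `1` to `x ∈ S(m)` at distance `k` from `1`,
where `2k ≤ m + 1`: this writes `x = a b` with `|a| = k` and `|b| = m - k`, and the rest of
the geodesic joins `a` to `x` outside `B(k - 1)`, so `a ∈ S(k)^∞`.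
-/

namespace SimpleGraph

variable {V V' : Type*} {H : SimpleGraph V} {H' : SimpleGraph V'}

theorem Iso.dist_eq (f : H ≃g H') (u v : V) : H'.dist (f u) (f v) = H.dist u v := by
  by_cases h : H.Reachable u v
  · obtain ⟨p, hp⟩ := h.exists_walk_length_eq_dist
    obtain ⟨q, hq⟩ :=
      (Iso.reachable_iff.mpr h : H'.Reachable (f u) (f v)).exists_walk_length_eq_dist
    refine le_antisymm ?_ ?_
    · rw [← hp, ← p.length_map f.toHom]
      exact H'.dist_le _
    · rw [← hq, ← q.length_map f.symm.toHom,
        ← Walk.length_copy _ (f.symm_apply_apply u) (f.symm_apply_apply v)]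
      exact H.dist_le _
  · rw [dist_eq_zero_of_not_reachable h,
      dist_eq_zero_of_not_reachable (mt Iso.reachable_iff.mp h)]

namespace Walk

variable {u v w : V}

theorem dist_add_dist_le_length (p : H.Walk u v) (hw : w ∈ p.support) :
    H.dist u w + H.dist w v ≤ p.length := by
  classical
  have h := congrArg length (p.take_spec hw)
  rw [length_append] at h
  have := H.dist_le (p.takeUntil w hw)
  have := H.dist_le (p.dropUntil w hw)
  omega

theorem dist_getVert_le (p : H.Walk u v) (n : ℕ) : H.dist u (p.getVert n) ≤ n :=
  (H.dist_le (p.take n)).trans (by simp)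

theorem dist_getVert_le_length_sub (p : H.Walk u v) (n : ℕ) :
    H.dist (p.getVert n) v ≤ p.length - n :=
  (H.dist_le (p.drop n)).trans (by simp)

end Walk

theorem finite_setOf_exists_walk_length_le (hH : ∀ v, (H.neighborSet v).Finite) (u : V)
    (n : ℕ) : {v | ∃ p : H.Walk v u, p.length ≤ n}.Finite := by
  induction n with
  | zero =>
    refine (Set.finite_singleton u).subset ?_
    rintro v ⟨p, hp⟩
    cases p with
    | nil => rfl
    | cons => simp at hp
  | succ n ih =>
    refine (ih.union (ih.biUnion fun w _ => hH w)).subset ?_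
    rintro v ⟨p, hp⟩
    cases p with
    | nil => exact Or.inl ⟨Walk.nil, by simp⟩
    | cons h q =>
      refine Or.inr (Set.mem_biUnion ⟨q, ?_⟩ h.symm)
      simp only [Walk.length_cons] at hp
      omega

end SimpleGraph

open SimpleGraph

variable {S : Set G}

def cayleyMulLeft (S : Set G) (a : G) : cayley G S ≃g cayley G S where
  toEquiv := Equiv.mulLeft a
  map_rel_iff' := by
    intro g h
    simp [cayley, mul_assoc]

@[simp]
theorem cayleyMulLeft_apply (a g : G) : cayleyMulLeft S a g = a * g := rfl

theorem cayley_dist_mul_left (a u v : G) :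
    (cayley G S).dist (a * u) (a * v) = (cayley G S).dist u v :=
  (cayleyMulLeft S a).dist_eq u v

theorem cayley_dist_eq_wlen (u v : G) : (cayley G S).dist u v = wlen S (u⁻¹ * v) := by
  rw [wlen, ← cayley_dist_mul_left u⁻¹, inv_mul_cancel]

theorem wlen_inv (g : G) : wlen S g⁻¹ = wlen S g := by
  rw [wlen, ← cayley_dist_mul_left g, mul_one, mul_inv_cancel, dist_comm]
  rfl

theorem cayley_reachable_one (hgen : Subgroup.closure S = ⊤) (g : G) :
    (cayley G S).Reachable 1 g := by
  have hg : g ∈ Subgroup.closure S := hgen ▸ Subgroup.mem_top g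
  induction hg using Subgroup.closure_induction with
  | mem s hs =>
    by_cases h1 : s = 1
    · rw [h1]
    · exact Adj.reachable ⟨Ne.symm h1, Or.inl (by simpa using hs)⟩
  | one => rfl
  | mul a b _ _ ha hb =>
    exact ha.trans (by simpa using (cayleyMulLeft S a).reachable_iff.mpr hb)
  | inv a _ ha =>
    simpa using ((cayleyMulLeft S a⁻¹).reachable_iff.mpr ha).symm

theorem cayley_connected (hgen : Subgroup.closure S = ⊤) : (cayley G S).Connected :=
  ⟨fun u v => (cayley_reachable_one hgen u).symm.trans (cayley_reachable_one hgen v)⟩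

theorem wlen_mul_le (hgen : Subgroup.closure S = ⊤) (a b : G) :
    wlen S (a * b) ≤ wlen S a + wlen S b := by
  have := (cayley_connected hgen).dist_triangle (u := 1) (v := a) (w := a * b)
  rwa [cayley_dist_eq_wlen a, inv_mul_cancel_left] at this

theorem wlen_le_wlen_add_dist (hgen : Subgroup.closure S = ⊤) (x y : G) :
    wlen S x ≤ wlen S y + (cayley G S).dist y x :=
  (cayley_connected hgen).dist_triangle

theorem finite_neighborSet_cayley (hS : S.Finite) (g : G) :
    ((cayley G S).neighborSet g).Finite := by
  refine ((hS.union hS.inv).image (g * ·)).subset ?_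
  rintro h ⟨-, hs | hs⟩
  · exact ⟨g⁻¹ * h, Or.inl hs, mul_inv_cancel_left g h⟩
  · exact ⟨g⁻¹ * h, Or.inr (by simpa using hs), mul_inv_cancel_left g h⟩

theorem finite_wBall (hS : S.Finite) (hgen : Subgroup.closure S = ⊤) (n : ℕ) :
    (wBall S n).Finite := by
  refine ((cayley G S).finite_setOf_exists_walk_length_le (finite_neighborSet_cayley hS) 1
    n).subset fun g hg => ?_
  obtain ⟨p, hp⟩ := (cayley_connected hgen).exists_walk_length_eq_dist g 1
  exact ⟨p, by rw [hp, dist_comm]; exact hg⟩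

theorem exists_lt_wlen [Infinite G] (hS : S.Finite) (hgen : Subgroup.closure S = ⊤) (M : ℕ) :
    ∃ y : G, M < wlen S y := by
  by_contra! h
  exact Set.infinite_univ ((finite_wBall hS hgen M).subset fun g _ => h g)

theorem exists_lt_wlen_wlen_inv_mul_le [Infinite G] (hS : S.Finite)
    (hgen : Subgroup.closure S = ⊤) (x : G) (M : ℕ) :
    ∃ y, M < wlen S y ∧ wlen S (x⁻¹ * y) ≤ wlen S y := by
  by_contra! H
  have hpow : ∀ j : ℕ, wlen S (x ^ j) ≤ M := by
    intro j
    induction j with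
    | zero => simp [wlen]
    | succ j ih =>
      rw [pow_succ']
      by_contra! hj
      have := H _ hj
      rw [inv_mul_cancel_left] at this
      omega
  obtain ⟨y, hy⟩ := exists_lt_wlen hS hgen M
  have hgrow : ∀ j : ℕ, wlen S y + j ≤ wlen S (x⁻¹ ^ j * y) := by
    intro j
    induction j with
    | zero => simp
    | succ j ih =>
      have := H _ (by omega : M < wlen S (x⁻¹ ^ j * y))
      rw [← mul_assoc, ← pow_succ'] at this
      omega
  have := (hgrow (M + 1)).trans (wlen_mul_le hgen _ _)
  rw [inv_pow, wlen_inv] at this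
  have := hpow (M + 1)
  omega

theorem wlen_le_two_mul_wlen_of_mem_support (hgen : Subgroup.closure S = ⊤) {x y : G}
    (p : (cayley G S).Walk x y) (hp : p.length ≤ wlen S y) {v : G} (hv : v ∈ p.support) :
    wlen S x ≤ 2 * wlen S v := by
  have h₁ := p.dist_add_dist_le_length hv
  have h₂ := wlen_le_wlen_add_dist hgen x v
  have h₃ := wlen_le_wlen_add_dist hgen y v
  rw [dist_comm] at h₂
  omega

theorem mem_infPart_setOf_le_wlen [Infinite G] (hS : S.Finite) (hgen : Subgroup.closure S = ⊤)
    {x : G} {k : ℕ} (hk : 2 * k ≤ wlen S x + 1) : x ∈ infPart S {g | k ≤ wlen S g} := by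
  have hx : x ∈ {g : G | k ≤ wlen S g} := by
    rw [Set.mem_ofPred_eq]
    omega
  refine ⟨hx, fun hfin => ?_⟩
  obtain ⟨M, hM⟩ := (hfin.image fun g => wlen S g.1).bddAbove
  obtain ⟨y, hyM, hy⟩ := exists_lt_wlen_wlen_inv_mul_le hS hgen x M
  obtain ⟨p, hp⟩ := (cayley_connected hgen).exists_walk_length_eq_dist x y
  have hsupp : ∀ v ∈ p.support, v ∈ {g : G | k ≤ wlen S g} := fun v hv => by
    have := wlen_le_two_mul_wlen_of_mem_support hgen p (by rwa [hp, cayley_dist_eq_wlen]) hv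
    rw [Set.mem_ofPred_eq]
    omega
  have hreach : ((cayley G S).induce {g | k ≤ wlen S g}).Reachable ⟨x, hx⟩
      ⟨y, hsupp y p.end_mem_support⟩ := ⟨p.induce _ hsupp⟩
  have : wlen S y ≤ M := hM ⟨_, hreach, rfl⟩
  omega

theorem retreatDepth_le_half [Infinite G] (hS : S.Finite) (hgen : Subgroup.closure S = ⊤)
    (x : G) : retreatDepth S x ≤ wlen S x / 2 := by
  refine Nat.sInf_le ?_
  have hset : {g : G | wlen S x ≤ wlen S g + wlen S x / 2} =
      {g | wlen S x - wlen S x / 2 ≤ wlen S g} := by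
    ext
    simp only [Set.mem_ofPred_eq]
    omega
  rw [Set.mem_ofPred_eq, hset]
  exact mem_infPart_setOf_le_wlen hS hgen (by omega)

theorem mem_infPart_of_walk {A : Set G} {a x : G} (p : (cayley G S).Walk a x)
    (hp : ∀ v ∈ p.support, v ∈ A) (hx : x ∈ infPart S A) : a ∈ infPart S A :=
  ⟨hp a p.start_mem_support, hx.2.mono fun _ hw => Reachable.trans ⟨p.induce A hp⟩ hw⟩

theorem exists_mem_sphereInf_mul_eq [Infinite G] (hS : S.Finite)
    (hgen : Subgroup.closure S = ⊤) {m k : ℕ} (hkm : k ≤ m) (hk : 2 * k ≤ m + 1) {x : G}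
    (hx : x ∈ wSphere S m) :
    ∃ a ∈ sphereInf S k 0, ∃ b ∈ wSphere S (m - k), a * b = x := by
  have hxm : wlen S x = m := hx
  obtain ⟨p, hp⟩ := (cayley_connected hgen).exists_walk_length_eq_dist 1 x
  set a := p.getVert k
  have h₁ : wlen S a ≤ k := p.dist_getVert_le k
  have h₂ : (cayley G S).dist a x ≤ p.length - k := p.dist_getVert_le_length_sub k
  have h₃ : m ≤ wlen S a + (cayley G S).dist a x := hxm ▸ wlen_le_wlen_add_dist hgen x a
  have hlen : p.length = m := hp.trans hxm
  have hdist : (cayley G S).dist a x = m - k := by omega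
  obtain ⟨q, hq⟩ := (cayley_connected hgen).exists_walk_length_eq_dist a x
  have hsupp : ∀ v ∈ q.support, v ∈ {g : G | k ≤ wlen S g} := fun v hv => by
    have := q.dist_add_dist_le_length hv
    have := wlen_le_wlen_add_dist hgen x v
    rw [Set.mem_ofPred_eq]
    omega
  refine ⟨a, ⟨⟨by omega, by omega⟩, mem_infPart_of_walk q hsupp
    (mem_infPart_setOf_le_wlen hS hgen (by omega))⟩, a⁻¹ * x, ?_, mul_inv_cancel_left a x⟩
  show wlen S (a⁻¹ * x) = m - k
  rw [← cayley_dist_eq_wlen, hdist]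

theorem card_wSphere_le_mul [Infinite G] (hS : S.Finite) (hgen : Subgroup.closure S = ⊤)
    {m k : ℕ} (hkm : k ≤ m) (hk : 2 * k ≤ m + 1) :
    Nat.card ↥(wSphere S m) ≤
      Nat.card ↥(sphereInf S k 0) * Nat.card ↥(wSphere S (m - k)) := by
  have hfin : (sphereInf S k 0 ×ˢ wSphere S (m - k)).Finite :=
    ((finite_wBall hS hgen k).subset fun _ hg => hg.1.2).prod
      ((finite_wBall hS hgen _).subset fun _ hg => hg.le)
  have hsub : wSphere S m ⊆
      (fun p : G × G => p.1 * p.2) '' (sphereInf S k 0 ×ˢ wSphere S (m - k)) := by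
    intro x hx
    obtain ⟨a, ha, b, hb, rfl⟩ := exists_mem_sphereInf_mul_eq hS hgen hkm hk hx
    exact ⟨(a, b), ⟨ha, hb⟩, rfl⟩
  simp only [Nat.card_coe_set_eq, ← Set.ncard_prod]
  exact (Set.ncard_le_ncard hsub (hfin.image _)).trans (Set.ncard_image_le hfin)

/-- In any infinite group with finite generating set, every element `x` has
retreat depth at most `⌊|x|/2⌋`; consequently `|S(2n)| ≤ |S(n)^∞|·|S(n)|` and
`|S(2n+1)| ≤ |S(n+1)^∞|·|S(n)|`. -/
theorem stmt_19 {G : Type*} [Group G] [Infinite G] (S : Set G) (hSfin : S.Finite)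
    (hgen : Subgroup.closure S = ⊤) :
    (∀ x : G, retreatDepth S x ≤ wlen S x / 2) ∧
    ∀ n : ℕ,
      Nat.card ↥(wSphere S (2 * n)) ≤
        Nat.card ↥(sphereInf S n 0) * Nat.card ↥(wSphere S n) ∧
      Nat.card ↥(wSphere S (2 * n + 1)) ≤
        Nat.card ↥(sphereInf S (n + 1) 0) * Nat.card ↥(wSphere S n) := by
  refine ⟨retreatDepth_le_half hSfin hgen, fun n => ⟨?_, ?_⟩⟩
  · have := card_wSphere_le_mul hSfin hgen (m := 2 * n) (k := n) (by omega) (by omega)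
    rwa [show 2 * n - n = n by omega] at this
  · have := card_wSphere_le_mul hSfin hgen (m := 2 * n + 1) (k := n + 1) (by omega) (by omega)
    rwa [show 2 * n + 1 - (n + 1) = n by omega] at this
end
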